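/- For a strict partition λ=(λ₁,λ₂,…,λ_ℓ) and a positive integer s, the shifted Young diagram S(λ) is an s-CSYD if and only if both of the following hold: (a) λ is an s̄-core, and (b) if s is even then 3s/2 is not a part of λ. -/

import Mathlib

/-- A strict partition, encoded as a strictly decreasing list of positive integers. -/
def IsStrictPartition (l : List ℕ) : Prop :=
  List.Pairwise (· > ·) l ∧ ∀ x ∈ l, 0 < x

/-- The set of bar lengths in the (0-indexed) `i`-th row of a strict partition `l`:
`{λᵢ + λⱼ : i < j ≤ ℓ} ∪ ({1,…,λᵢ} \ {λᵢ − λⱼ : i < j ≤ ℓ})`. -/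
def barLengths (l : List ℕ) (i : ℕ) : Finset ℕ :=
  ((Finset.Ioo i l.length).image fun j => l.getD i 0 + l.getD j 0) ∪
    (Finset.Icc 1 (l.getD i 0) \
      ((Finset.Ioo i l.length).image fun j => l.getD i 0 - l.getD j 0))

/-- `l` is an `s`-bar-core: `s` is not a bar length in any row. -/
def IsBarCore (l : List ℕ) (s : ℕ) : Prop :=
  ∀ i, i < l.length → s ∉ barLengths l i

/-- The shifted hook length of the box in row `i`, column `c` (both 0-indexed, where the
`i`-th row of the shifted Young diagram occupies columns `i, …, λᵢ + i − 1`): the number of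
boxes to its right in row `i` together with itself, plus the number of boxes below it in
column `c`, plus the number of boxes of row `c + 1` if that row exists. -/
def shiftedHook (l : List ℕ) (i c : ℕ) : ℕ :=
  (l.getD i 0 + i - c) +
    ((Finset.Ioc i c).filter fun i' => c < l.getD i' 0 + i').card +
    l.getD (c + 1) 0

/-- `l` is an `s`-CSYD: no shifted hook length of the shifted Young diagram `S(λ)`
is divisible by `s`. -/
def IsCSYD (l : List ℕ) (s : ℕ) : Prop :=
  ∀ i c, i < l.length → i ≤ c → c < l.getD i 0 + i → ¬ s ∣ shiftedHook l i c

/-- The `i`-th part (0-indexed) of the doubled distinct partition `λλ`, read off from the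
Frobenius symbol `(λ₁,…,λ_ℓ ; λ₁−1,…,λ_ℓ−1)`: for `i < ℓ` the part is `λᵢ + i + 1`
(1-indexed: `λᵢ + i`), and for `ℓ ≤ i` the part is determined by the column lengths
`λⱼ + j − 1` (1-indexed). -/
def ddPart (l : List ℕ) (i : ℕ) : ℕ :=
  if i < l.length then l.getD i 0 + i + 1
  else ((Finset.range l.length).filter fun j => i + 1 ≤ l.getD j 0 + j).card

/-- The doubled distinct partition `λλ` of a strict partition `l`, as a list of parts. -/
def doubledDistinct (l : List ℕ) : List ℕ :=
  (List.range (l.getD 0 0)).map (ddPart l)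

/-- Ordinary hook length of the box in row `i`, column `j` (0-indexed) of a partition `m`. -/
def hookLen (m : List ℕ) (i j : ℕ) : ℕ :=
  (m.getD i 0 - j) + ((Finset.Ioo i m.length).filter fun i' => j < m.getD i' 0).card

/-- `m` is an `s`-core: no hook length is divisible by `s`. -/
def IsCore (m : List ℕ) (s : ℕ) : Prop :=
  ∀ i j, i < m.length → j < m.getD i 0 → ¬ s ∣ hookLen m i j

/-- NE lattice paths from `(0,0)` to `(a,b)`, encoded as lists of steps where
`false` is an east step `E = (1,0)` and `true` is a north step `N = (0,1)`. -/
def NEPaths (a b : ℕ) : Set (List Bool) :=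
  {w | w.count false = a ∧ w.count true = b}

/-- A step of a free Motzkin path. -/
inductive MStep : Type
  | U : MStep
  | F : MStep
  | D : MStep
deriving DecidableEq

/-- The height change of a step: `U = (1,1)`, `F = (1,0)`, `D = (1,−1)`. -/
def MStep.ht : MStep → ℤ
  | .U => 1
  | .F => 0
  | .D => -1

/-- Free Motzkin paths of type `(p,q)`: lattice paths from `(0,0)` to `(p,q)` with steps
`U = (1,1)`, `F = (1,0)` and `D = (1,−1)`, encoded as lists of steps. -/
def FreeMotzkin (p : ℕ) (q : ℤ) : Set (List MStep) :=
  {w | w.length = p ∧ (w.map MStep.ht).sum = q}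

/-- `multinom n a b c = n! / (a! · b! · c!)`. -/
def multinom (n a b c : ℕ) : ℕ :=
  n.factorial / (a.factorial * b.factorial * c.factorial)

namespace CsydAux

variable {l : List ℕ}

lemma part_pos (hl : IsStrictPartition l) {i : ℕ} (hi : i < l.length) : 0 < l.getD i 0 := by
  rw [List.getD_eq_getElem l 0 hi]
  exact hl.2 _ (List.getElem_mem hi)

lemma sorted_lt (hl : IsStrictPartition l) {i j : ℕ} (hij : i < j) (hj : j < l.length) :
    l.getD j 0 < l.getD i 0 := by
  rw [List.getD_eq_getElem l 0 hj, List.getD_eq_getElem l 0 (hij.trans hj)]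
  exact List.pairwise_iff_getElem.mp hl.1 i j (hij.trans hj) hj hij

lemma chain_le (hl : IsStrictPartition l) {i j : ℕ} (hij : i ≤ j) (hj : j < l.length) :
    l.getD j 0 + (j - i) ≤ l.getD i 0 := by
  induction j, hij using Nat.le_induction with
  | base => simp
  | succ j hij ih =>
    have h1 : j < l.length := by omega
    have h2 : l.getD (j + 1) 0 < l.getD j 0 := sorted_lt hl (by omega) hj
    have h3 := ih h1
    omega

lemma length_le (hl : IsStrictPartition l) {i : ℕ} (hi : i < l.length) :
    l.length ≤ l.getD i 0 + i := by
  have h0 : l.length - 1 < l.length := by omega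
  have h1 := chain_le hl (by omega : i ≤ l.length - 1) h0
  have h2 := part_pos hl h0
  omega

lemma mem_index {x : ℕ} (hx : x ∈ l) : ∃ i, i < l.length ∧ l.getD i 0 = x := by
  obtain ⟨i, hi, rfl⟩ := List.mem_iff_getElem.mp hx
  exact ⟨i, hi, List.getD_eq_getElem l 0 hi⟩

lemma index_mem {i : ℕ} (hi : i < l.length) : l.getD i 0 ∈ l := by
  rw [List.getD_eq_getElem l 0 hi]
  exact List.getElem_mem hi

lemma later_index (hl : IsStrictPartition l) {i x : ℕ} (hi : i < l.length) (hx : x ∈ l)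
    (hlt : x < l.getD i 0) : ∃ j, i < j ∧ j < l.length ∧ l.getD j 0 = x := by
  obtain ⟨j, hj, hjx⟩ := mem_index hx
  refine ⟨j, ?_, hj, hjx⟩
  by_contra h
  push_neg at h
  rcases Nat.eq_or_lt_of_le h with rfl | h'
  · omega
  · have := sorted_lt hl h' hi; omega

lemma hook_region1 (hl : IsStrictPartition l) {i c : ℕ} (hic : i ≤ c) (hc : c + 1 < l.length) :
    shiftedHook l i c = l.getD i 0 + l.getD (c + 1) 0 := by
  unfold shiftedHook
  have hcl : c < l.length := by omega
  have hfilter : (Finset.Ioc i c).filter (fun i' => c < l.getD i' 0 + i') = Finset.Ioc i c := by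
    apply Finset.filter_true_of_mem
    intro j hj
    rw [Finset.mem_Ioc] at hj
    have h1 := chain_le hl hj.2 hcl
    have h2 := part_pos hl hcl
    omega
  rw [hfilter, Nat.card_Ioc]
  have h3 := chain_le hl hic hcl
  have h4 := part_pos hl hcl
  omega

lemma hook_region2 {i c : ℕ} (h1 : l.length ≤ c + 1) :
    shiftedHook l i c = (l.getD i 0 + i - c) +
      ((Finset.Ioo i l.length).filter fun j => c < l.getD j 0 + j).card := by
  unfold shiftedHook
  have ha : l.getD (c + 1) 0 = 0 := List.getD_eq_default _ _ (by omega)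
  have hset : (Finset.Ioc i c).filter (fun i' => c < l.getD i' 0 + i')
      = (Finset.Ioo i l.length).filter (fun j => c < l.getD j 0 + j) := by
    ext j
    simp only [Finset.mem_filter, Finset.mem_Ioc, Finset.mem_Ioo]
    constructor
    · rintro ⟨⟨h2, h3⟩, h4⟩
      refine ⟨⟨h2, ?_⟩, h4⟩
      by_contra h5
      rw [List.getD_eq_default _ _ (by omega)] at h4
      omega
    · rintro ⟨⟨h2, h3⟩, h4⟩
      exact ⟨⟨h2, by omega⟩, h4⟩
  rw [hset, ha]
  omega

lemma tail_hook_mem (hl : IsStrictPartition l) {i c : ℕ} (hi : i < l.length)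
    (h1 : l.length ≤ c + 1) (h2 : c < l.getD i 0 + i) :
    shiftedHook l i c ∈ Finset.Icc 1 (l.getD i 0) \
      ((Finset.Ioo i l.length).image fun j => l.getD i 0 - l.getD j 0) := by
  rw [hook_region2 h1]
  have hci : i ≤ c := by omega
  have hFbound : ((Finset.Ioo i l.length).filter fun j => c < l.getD j 0 + j).card ≤ c - i := by
    calc ((Finset.Ioo i l.length).filter fun j => c < l.getD j 0 + j).card
        ≤ (Finset.Ioc i c).card := by
          apply Finset.card_le_card
          intro j hj
          simp only [Finset.mem_filter, Finset.mem_Ioo] at hj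
          rw [Finset.mem_Ioc]
          exact ⟨hj.1.1, by omega⟩
      _ = c - i := Nat.card_Ioc i c
  rw [Finset.mem_sdiff, Finset.mem_Icc]
  refine ⟨⟨by omega, by omega⟩, ?_⟩
  intro hmem
  rw [Finset.mem_image] at hmem
  obtain ⟨k, hk, hke⟩ := hmem
  rw [Finset.mem_Ioo] at hk
  have hak := sorted_lt hl hk.1 hk.2
  by_cases hcase : c < l.getD k 0 + k
  · have hsub : Finset.Ioc i k ⊆
        (Finset.Ioo i l.length).filter fun j => c < l.getD j 0 + j := by
      intro j hj
      rw [Finset.mem_Ioc] at hj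
      rw [Finset.mem_filter, Finset.mem_Ioo]
      have hjl : j < l.length := by omega
      have := chain_le hl hj.2 hk.2
      exact ⟨⟨hj.1, hjl⟩, by omega⟩
    have hcard := Finset.card_le_card hsub
    rw [Nat.card_Ioc] at hcard
    omega
  · have hsub : ((Finset.Ioo i l.length).filter fun j => c < l.getD j 0 + j)
        ⊆ Finset.Ioo i k := by
      intro j hj
      rw [Finset.mem_filter, Finset.mem_Ioo] at hj
      rw [Finset.mem_Ioo]
      refine ⟨hj.1.1, ?_⟩
      by_contra h5
      have := chain_le hl (by omega : k ≤ j) hj.1.2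
      omega
    have hcard := Finset.card_le_card hsub
    rw [Nat.card_Ioo] at hcard
    omega

lemma tail_strict (hl : IsStrictPartition l) {i c c' : ℕ} (h1 : l.length ≤ c + 1)
    (hcc : c < c') (h2 : c' < l.getD i 0 + i) :
    shiftedHook l i c' < shiftedHook l i c := by
  rw [hook_region2 h1, hook_region2 (by omega)]
  have hmono : ((Finset.Ioo i l.length).filter fun j => c' < l.getD j 0 + j).card
      ≤ ((Finset.Ioo i l.length).filter fun j => c < l.getD j 0 + j).card := by
    apply Finset.card_le_card
    intro j hj
    rw [Finset.mem_filter] at hj ⊢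
    exact ⟨hj.1, by omega⟩
  omega

lemma hook_mem (hl : IsStrictPartition l) {i c : ℕ} (hi : i < l.length) (hic : i ≤ c)
    (hc : c < l.getD i 0 + i) : shiftedHook l i c ∈ barLengths l i := by
  rw [barLengths, Finset.mem_union]
  by_cases h : c + 1 < l.length
  · left
    rw [hook_region1 hl hic h, Finset.mem_image]
    exact ⟨c + 1, Finset.mem_Ioo.mpr ⟨by omega, h⟩, rfl⟩
  · right
    exact tail_hook_mem hl hi (by omega) hc

lemma bar_mem (hl : IsStrictPartition l) {i b : ℕ} (hi : i < l.length)
    (hb : b ∈ barLengths l i) :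
    ∃ c, i ≤ c ∧ c < l.getD i 0 + i ∧ shiftedHook l i c = b := by
  have hlen : l.length ≤ l.getD i 0 + i := length_le hl hi
  rw [barLengths, Finset.mem_union] at hb
  rcases hb with hb | hb
  · rw [Finset.mem_image] at hb
    obtain ⟨j, hj, hje⟩ := hb
    rw [Finset.mem_Ioo] at hj
    refine ⟨j - 1, by omega, by omega, ?_⟩
    have hj1 : j - 1 + 1 = j := by omega
    rw [hook_region1 hl (by omega) (by omega), hj1]
    exact hje
  · set C := Finset.Icc (l.length - 1) (l.getD i 0 + i - 1) with hC
    set T := Finset.Icc 1 (l.getD i 0) \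
      ((Finset.Ioo i l.length).image fun j => l.getD i 0 - l.getD j 0) with hT
    have hinj : Set.InjOn (shiftedHook l i) ↑C := by
      intro c hc c' hc' he
      rw [hC, Finset.coe_Icc, Set.mem_Icc] at hc hc'
      by_contra hne
      rcases Nat.lt_or_ge c c' with h | h
      · exact absurd he (tail_strict hl (by omega) h (by omega)).ne'
      · have h' : c' < c := by omega
        exact absurd he (tail_strict hl (by omega) h' (by omega)).ne
    have himg : C.image (shiftedHook l i) ⊆ T := by
      intro x hx
      rw [Finset.mem_image] at hx
      obtain ⟨c, hc, rfl⟩ := hx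
      rw [hC, Finset.mem_Icc] at hc
      exact tail_hook_mem hl hi (by omega) (by omega)
    have hDsub : ((Finset.Ioo i l.length).image fun j => l.getD i 0 - l.getD j 0)
        ⊆ Finset.Icc 1 (l.getD i 0) := by
      intro x hx
      rw [Finset.mem_image] at hx
      obtain ⟨j, hj, rfl⟩ := hx
      rw [Finset.mem_Ioo] at hj
      have := sorted_lt hl hj.1 hj.2
      have := part_pos hl hj.2
      rw [Finset.mem_Icc]
      omega
    have hinjD : Set.InjOn (fun j => l.getD i 0 - l.getD j 0) ↑(Finset.Ioo i l.length) := by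
      intro j hj k hk he
      rw [Finset.coe_Ioo, Set.mem_Ioo] at hj hk
      have h1 := sorted_lt hl hj.1 hj.2
      have h2 := sorted_lt hl hk.1 hk.2
      simp only at he
      by_contra hne
      rcases Nat.lt_or_ge j k with h | h
      · have := sorted_lt hl h hk.2; omega
      · have h' : k < j := by omega
        have := sorted_lt hl h' hj.2; omega
    have hcardD : ((Finset.Ioo i l.length).image fun j => l.getD i 0 - l.getD j 0).card
        = l.length - 1 - i := by
      rw [Finset.card_image_of_injOn hinjD, Nat.card_Ioo]
      omega
    have hcardT : T.card = l.getD i 0 - (l.length - 1 - i) := by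
      rw [hT, Finset.card_sdiff_of_subset hDsub, Nat.card_Icc, hcardD]
      omega
    have hcardC : C.card = l.getD i 0 + i + 1 - l.length := by
      rw [hC, Nat.card_Icc]
      omega
    have heq : C.image (shiftedHook l i) = T := by
      apply Finset.eq_of_subset_of_card_le himg
      rw [Finset.card_image_of_injOn hinj, hcardT, hcardC]
      omega
    rw [← heq, Finset.mem_image] at hb
    obtain ⟨c, hc, rfl⟩ := hb
    rw [hC, Finset.mem_Icc] at hc
    exact ⟨c, by omega, by omega, rfl⟩

end CsydAux
/-- For a strict partition `λ` and a positive integer `s`, the shifted Young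
diagram `S(λ)` is an `s`-CSYD iff `λ` is an `s̄`-core and, when `s` is even, `3s/2` is not
a part of `λ`. -/
theorem csyd_iff (l : List ℕ) (hl : IsStrictPartition l) (s : ℕ) (hs : 0 < s) :
    IsCSYD l s ↔ IsBarCore l s ∧ (Even s → 3 * s / 2 ∉ l) := by
  open CsydAux in
  have key : IsCSYD l s ↔ ∀ i, i < l.length → ∀ b ∈ barLengths l i, ¬ s ∣ b := by
    constructor
    · intro h i hi b hb hdvd
      obtain ⟨c, h1, h2, h3⟩ := bar_mem hl hi hb
      exact h i c hi h1 h2 (h3 ▸ hdvd)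
    · intro h i c hi h1 h2 hdvd
      exact h i hi _ (hook_mem hl hi h1 h2) hdvd
  rw [key]
  constructor
  · intro h
    constructor
    · intro i hi hmem
      exact h i hi s hmem dvd_rfl
    · rintro ⟨t, ht⟩ h3
      have ht1 : 1 ≤ t := by omega
      have h3t : (3 * t : ℕ) ∈ l := by
        have : 3 * s / 2 = 3 * t := by omega
        rwa [this] at h3
      obtain ⟨i, hi, hix⟩ := mem_index h3t
      by_cases hT : t ∈ l
      · obtain ⟨j, hij, hjl, hjx⟩ := later_index hl hi hT (by omega)
        apply h i hi (l.getD i 0 + l.getD j 0) _ ⟨2, by omega⟩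
        rw [barLengths, Finset.mem_union]
        left
        rw [Finset.mem_image]
        exact ⟨j, Finset.mem_Ioo.mpr ⟨hij, hjl⟩, rfl⟩
      · apply h i hi s _ dvd_rfl
        rw [barLengths, Finset.mem_union]
        right
        rw [Finset.mem_sdiff, Finset.mem_Icc]
        refine ⟨⟨by omega, by omega⟩, ?_⟩
        intro hmem
        rw [Finset.mem_image] at hmem
        obtain ⟨j, hj, hje⟩ := hmem
        rw [Finset.mem_Ioo] at hj
        have h4 := sorted_lt hl hj.1 hj.2
        have h5 : l.getD j 0 = t := by omega
        exact hT (h5 ▸ index_mem hj.2)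
  · rintro ⟨hcore, hpart⟩ i hi b hb hdvd
    obtain ⟨k, rfl⟩ := hdvd
    have PA : ∀ x, x ∈ l → s ≤ x → x - s ∈ l := by
      intro x hx hsx
      obtain ⟨i', hi', rfl⟩ := mem_index hx
      have hni := hcore i' hi'
      rw [barLengths, Finset.mem_union, not_or, Finset.mem_sdiff, not_and, not_not] at hni
      have hmem := hni.2 (Finset.mem_Icc.mpr ⟨hs, hsx⟩)
      rw [Finset.mem_image] at hmem
      obtain ⟨j, hj, hje⟩ := hmem
      rw [Finset.mem_Ioo] at hj
      have h4 := sorted_lt hl hj.1 hj.2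
      have h5 : l.getD i' 0 - s = l.getD j 0 := by omega
      exact h5 ▸ index_mem hj.2
    have PB : ∀ x y, x ∈ l → y ∈ l → y < x → x + y ≠ s := by
      intro x y hx hy hyx he
      obtain ⟨i', hi', rfl⟩ := mem_index hx
      obtain ⟨j, hij, hjl, rfl⟩ := later_index hl hi' hy hyx
      apply hcore i' hi'
      rw [barLengths, Finset.mem_union]
      left
      rw [Finset.mem_image]
      exact ⟨j, Finset.mem_Ioo.mpr ⟨hij, hjl⟩, he⟩
    have PAk : ∀ m x, x ∈ l → s * m ≤ x → x - s * m ∈ l := by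
      intro m
      induction m with
      | zero => intro x hx _; simpa using hx
      | succ m ih =>
        intro x hx hmx
        rw [Nat.mul_succ] at hmx ⊢
        have h1 : x - s * m ∈ l := ih x hx (by omega)
        have h2 := PA _ h1 (by omega)
        have h3 : x - s * m - s = x - (s * m + s) := by omega
        rwa [h3] at h2
    have nosum : ∀ m x y, x ∈ l → y ∈ l → x ≠ y → x + y ≠ m * s := by
      intro m
      induction m using Nat.strong_induction_on with
      | _ m ih =>
        intro x y hx hy hxy he
        have main : ∀ x y, x ∈ l → y ∈ l → y < x → x + y = m * s → False := by
          intro x y hx hy hyx he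
          have hx0 := hl.2 x hx
          have hy0 := hl.2 y hy
          have hm1 : 1 ≤ m := by
            rcases Nat.eq_zero_or_pos m with rfl | h
            · omega
            · exact h
          rcases Nat.eq_or_lt_of_le hm1 with rfl | hm2
          · rw [one_mul] at he
            exact PB x y hx hy hyx he
          · have h2s : 2 * s ≤ m * s := Nat.mul_le_mul_right s (by omega)
            have hxs : s < x := by omega
            have hxsl : x - s ∈ l := PA x hx (by omega)
            have hsub : (m - 1) * s = m * s - s := by
              rw [Nat.sub_mul, one_mul]
            by_cases hne : x - s = y
            · by_cases hys : s ≤ y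
              · have hy' : y - s ∈ l := PA y hy hys
                exact ih (m - 1) (by omega) x (y - s) hx hy' (by omega) (by omega)
              · have hk2 : m = 2 := by
                  by_contra hk
                  have : 3 * s ≤ m * s := Nat.mul_le_mul_right s (by omega)
                  omega
                have he2 : x + y = 2 * s := by rw [hk2] at he; omega
                have hyeq : 2 * y = s := by omega
                apply hpart ⟨y, by omega⟩
                have : 3 * s / 2 = x := by omega
                exact this ▸ hx
            · exact ih (m - 1) (by omega) (x - s) y hxsl hy hne (by omega)
        rcases Nat.lt_or_ge y x with h | h
        · exact main x y hx hy h he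
        · have h' : x < y := by omega
          exact main y x hy hx h' (by omega)
    rw [barLengths, Finset.mem_union] at hb
    rcases hb with hb | hb
    · rw [Finset.mem_image] at hb
      obtain ⟨j, hj, hje⟩ := hb
      rw [Finset.mem_Ioo] at hj
      have h4 := sorted_lt hl hj.1 hj.2
      have hcomm : k * s = s * k := Nat.mul_comm k s
      exact nosum k (l.getD i 0) (l.getD j 0) (index_mem hi) (index_mem hj.2)
        (by omega) (by omega)
    · rw [Finset.mem_sdiff, Finset.mem_Icc] at hb
      obtain ⟨⟨hb1, hb2⟩, hb3⟩ := hb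
      have hk1 : 1 ≤ k := by
        rcases Nat.eq_zero_or_pos k with rfl | h
        · simp at hb1
        · exact h
      have hsk : 1 ≤ s * k := Nat.mul_pos hs hk1
      have hmeml : l.getD i 0 - s * k ∈ l := PAk k _ (index_mem hi) hb2
      obtain ⟨j, hij, hjl, hjx⟩ := later_index hl hi hmeml (by omega)
      apply hb3
      rw [Finset.mem_image]
      exact ⟨j, Finset.mem_Ioo.mpr ⟨hij, hjl⟩, by omega⟩
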